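/- Let π be a nonnesting permutation of the multiset {1,1,2,2,…,n,n}, let π̂ be its underlying permutation, and let ijk be any permutation of {1,2,3} (viewed as a pattern of length 3). Then π avoids the pattern ijjk (the length-4 word obtained from ijk by duplicating its middle letter j) if and only if π̂ avoids the pattern ijk. -/

import Mathlib

/-!
Split `w` at the two copies of the middle letter, `w = A y B y C`. Then `x y y z` is a
subsequence of `w` exactly when `x ∈ A` and `z ∈ C`, while `x y z` is a subsequence of the
underlying permutation exactly when `x ∈ A` and the first copy of `z` comes after `A`.
Nonnesting makes the two conditions on `z` agree: a letter occurring both in `A` and in `C`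
would give `z y y z`, and a letter with both copies in `B` would give `y z z y`.
-/

/-- `w` is a permutation of the multiset `{1,1,2,2,…,n,n}`:
a word in which every value in `{1,…,n}` occurs exactly twice
and no other value occurs. -/
def IsMultisetPerm (n : ℕ) (w : List ℕ) : Prop :=
  ∀ i : ℕ, w.count i = if 1 ≤ i ∧ i ≤ n then 2 else 0

/-- `t` is order-isomorphic to the word `σ`:
same length, and entries compare (both `<` and `=`) in the same way. -/
def OrderIsoWord (t σ : List ℕ) : Prop :=
  t.length = σ.length ∧
  ∀ r s : ℕ, r < σ.length → s < σ.length →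
    ((t.getD r 0 < t.getD s 0 ↔ σ.getD r 0 < σ.getD s 0) ∧
     (t.getD r 0 = t.getD s 0 ↔ σ.getD r 0 = σ.getD s 0))

/-- `w` contains the pattern `σ`: some subsequence of `w`
is order-isomorphic to `σ`. -/
def Contains (w σ : List ℕ) : Prop :=
  ∃ t : List ℕ, t.Sublist w ∧ OrderIsoWord t σ

/-- `w` avoids the pattern `σ`. -/
def Avoids (w σ : List ℕ) : Prop := ¬ Contains w σ

/-- `w` is a nonnesting permutation of `{1,1,2,2,…,n,n}`:
it avoids the patterns `1221` and `2112`. -/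
def IsNonnesting (n : ℕ) (w : List ℕ) : Prop :=
  IsMultisetPerm n w ∧ Avoids w [1,2,2,1] ∧ Avoids w [2,1,1,2]

/-- The underlying permutation of a word: the subsequence consisting of
the first occurrence of each value. -/
def underlyingPerm (w : List ℕ) : List ℕ := (w.reverse.dedup).reverse

open List

namespace List

variable {α : Type*}

theorem cons_sublist_append_cons_iff {a : α} {t L R : List α} (h : a ∉ L) :
    a :: t <+ L ++ a :: R ↔ t <+ R := by
  induction L with
  | nil => exact cons_sublist_cons
  | cons b L ih =>
    rw [mem_cons, not_or] at h
    simp [sublist_cons_iff, ih h.2, h.1]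

theorem cons_cons_sublist_append_cons_iff {x y : α} {t A M : List α} (hxy : x ≠ y) (hA : y ∉ A)
    (hM : ¬ y :: t <+ M) : x :: y :: t <+ A ++ y :: M ↔ x ∈ A ∧ t <+ M := by
  induction A with
  | nil => simpa [sublist_cons_iff, hxy] using fun h => hM ((sublist_cons_self x _).trans h)
  | cons a A ih =>
    rw [mem_cons, not_or] at hA
    simp [sublist_cons_iff, ih hA.2, cons_sublist_append_cons_iff hA.2, or_and_right, or_comm]

theorem cons_cons_cons_sublist_append_cons_append_cons_iff {x y z : α} {A B C : List α}
    (hxy : x ≠ y) (hA : y ∉ A) (hB : y ∉ B) (hC : y ∉ C) :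
    [x, y, y, z] <+ A ++ y :: (B ++ y :: C) ↔ x ∈ A ∧ z ∈ C := by
  have hyz : ¬ [y, z] <+ C := fun h => hC (h.subset mem_cons_self)
  rw [cons_cons_sublist_append_cons_iff hxy hA, cons_sublist_append_cons_iff hB, singleton_sublist]
  rwa [cons_sublist_append_cons_iff hB]

theorem exists_eq_append_cons_append_cons_of_count_eq_two [DecidableEq α] {y : α} {w : List α}
    (h : w.count y = 2) : ∃ A B C, w = A ++ y :: (B ++ y :: C) ∧ y ∉ A ∧ y ∉ B ∧ y ∉ C := by
  obtain ⟨A, M, rfl, hA⟩ := eq_append_cons_of_mem (count_pos_iff.mp (by omega : 0 < w.count y))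
  have hM : M.count y = 1 := by simpa [count_append, count_eq_zero.mpr hA] using h
  obtain ⟨B, C, rfl, hB⟩ := eq_append_cons_of_mem (count_pos_iff.mp (by omega : 0 < M.count y))
  have hC : C.count y = 0 := by simpa [count_append, count_eq_zero.mpr hB] using hM
  exact ⟨A, B, C, rfl, hA, hB, count_eq_zero.mp hC⟩

theorem dedup_append_eq_filter_append [DecidableEq α] (l₁ l₂ : List α) :
    (l₁ ++ l₂).dedup = l₁.dedup.filter (· ∉ l₂) ++ l₂.dedup := by
  induction l₁ with
  | nil => simp
  | cons a l ih =>
    by_cases hl : a ∈ l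
    · simp [dedup_cons_of_mem hl, dedup_cons_of_mem (mem_append_left l₂ hl), ih]
    by_cases hl₂ : a ∈ l₂
    · simp [dedup_cons_of_notMem hl, dedup_cons_of_mem (mem_append_right l hl₂), ih, hl₂]
    · have hl₁₂ : a ∉ l ++ l₂ := by simp [hl, hl₂]
      simp [dedup_cons_of_notMem hl, dedup_cons_of_notMem hl₁₂, ih, hl₂]

end List

theorem mem_underlyingPerm {x : ℕ} {w : List ℕ} : x ∈ underlyingPerm w ↔ x ∈ w := by
  simp [underlyingPerm]

theorem underlyingPerm_append (l₁ l₂ : List ℕ) :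
    underlyingPerm (l₁ ++ l₂) = underlyingPerm l₁ ++ (underlyingPerm l₂).filter (· ∉ l₁) := by
  simp [underlyingPerm, dedup_append_eq_filter_append, filter_reverse]

theorem sublist_underlyingPerm_append_cons_iff {x y z : ℕ} {A M : List ℕ} (hxy : x ≠ y)
    (hA : y ∉ A) : [x, y, z] <+ underlyingPerm (A ++ y :: M) ↔ x ∈ A ∧ z ∈ M ∧ z ∉ A ∧ z ≠ y := by
  have hsplit : underlyingPerm (A ++ y :: M) =
      underlyingPerm A ++ y :: ((underlyingPerm M).filter (· ∉ [y])).filter (· ∉ A) := by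
    rw [underlyingPerm_append, ← singleton_append, underlyingPerm_append]
    simp [underlyingPerm, hA]
  rw [hsplit, cons_cons_sublist_append_cons_iff hxy (by rwa [mem_underlyingPerm])
    (fun h => by simpa using h.subset mem_cons_self), singleton_sublist]
  simp [mem_underlyingPerm]

theorem orderIsoWord_dup_middle_iff {a b c d i j k : ℕ} :
    OrderIsoWord [a, b, c, d] [i, j, j, k] ↔ b = c ∧ OrderIsoWord [a, b, d] [i, j, k] := by
  -- `r ↦ r + r / 2` sends the positions `0, 1, 2` of `abd` to `0, 1, 3` in `abcd`, and
  -- `r ↦ r - r / 2` collapses the positions `0, 1, 2, 3` of `abbd` onto `0, 1, 1, 2` in `abd`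
  constructor
  · rintro ⟨-, h⟩
    refine ⟨(h 1 2 (by simp) (by simp)).2.mpr rfl, rfl, fun r s hr hs => ?_⟩
    simp only [length_cons, length_nil] at hr hs
    have := h (r + r / 2) (s + s / 2) (by simp; omega) (by simp; omega)
    interval_cases r <;> interval_cases s <;>
      simp only [Nat.reduceDiv, Nat.reduceAdd, getD_cons_zero, getD_cons_succ] at this ⊢ <;>
      exact this
  · rintro ⟨rfl, -, h⟩
    refine ⟨rfl, fun r s hr hs => ?_⟩
    simp only [length_cons, length_nil] at hr hs
    have := h (r - r / 2) (s - s / 2) (by simp; omega) (by simp; omega)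
    interval_cases r <;> interval_cases s <;>
      simp only [Nat.reduceDiv, Nat.reduceSub, getD_cons_zero, getD_cons_succ] at this ⊢ <;>
      exact this

theorem contains_dup_middle_iff {w : List ℕ} {i j k : ℕ} :
    Contains w [i, j, j, k] ↔ ∃ x y z, [x, y, y, z] <+ w ∧ OrderIsoWord [x, y, z] [i, j, k] := by
  constructor
  · rintro ⟨t, hsub, ht⟩
    obtain ⟨a, b, c, d, rfl⟩ := length_eq_four.mp ht.1
    obtain ⟨rfl, h⟩ := orderIsoWord_dup_middle_iff.mp ht
    exact ⟨a, b, d, hsub, h⟩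
  · rintro ⟨x, y, z, hsub, h⟩
    exact ⟨_, hsub, orderIsoWord_dup_middle_iff.mpr ⟨rfl, h⟩⟩

theorem contains_triple_iff {u : List ℕ} {i j k : ℕ} :
    Contains u [i, j, k] ↔ ∃ x y z, [x, y, z] <+ u ∧ OrderIsoWord [x, y, z] [i, j, k] := by
  constructor
  · rintro ⟨t, hsub, ht⟩
    obtain ⟨x, y, z, rfl⟩ := length_eq_three.mp ht.1
    exact ⟨x, y, z, hsub, ht⟩
  · rintro ⟨x, y, z, hsub, h⟩
    exact ⟨_, hsub, h⟩

theorem orderIsoWord_nest_of_lt {p q : ℕ} (hpq : p < q) :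
    OrderIsoWord [p, q, q, p] [1, 2, 2, 1] ∧ OrderIsoWord [q, p, p, q] [2, 1, 1, 2] := by
  refine ⟨⟨rfl, fun r s hr hs => ?_⟩, ⟨rfl, fun r s hr hs => ?_⟩⟩ <;>
  · simp only [length_cons, length_nil] at hr hs
    interval_cases r <;> interval_cases s <;> simp <;> omega

namespace IsNonnesting

variable {n : ℕ} {w : List ℕ}

theorem count_eq_two (hw : IsNonnesting n w) {v : ℕ} (hv : v ∈ w) : w.count v = 2 := by
  have h := hw.1 v
  split_ifs at h
  · exact h
  · exact absurd (count_eq_zero.mp h) (not_not.mpr hv)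

theorem not_sublist_nest (hw : IsNonnesting n w) {p q : ℕ} (hpq : p ≠ q) :
    ¬ [p, q, q, p] <+ w := by
  intro h
  rcases hpq.lt_or_gt with hlt | hgt
  · exact hw.2.1 ⟨_, h, (orderIsoWord_nest_of_lt hlt).1⟩
  · exact hw.2.2 ⟨_, h, (orderIsoWord_nest_of_lt hgt).2⟩

theorem mem_right_iff_notMem_left {y z : ℕ} {A B C : List ℕ}
    (hw : IsNonnesting n (A ++ y :: (B ++ y :: C))) (hA : y ∉ A) (hB : y ∉ B) (hC : y ∉ C)
    (hzy : z ≠ y) (hz : z ∈ B ++ y :: C) : z ∈ C ↔ z ∉ A := by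
  refine ⟨fun hzC hzA => hw.not_sublist_nest hzy ?_, fun hzA => by_contra fun hzC => ?_⟩
  · exact (cons_cons_cons_sublist_append_cons_append_cons_iff hzy hA hB hC).mpr ⟨hzA, hzC⟩
  · -- otherwise both copies of `z` lie strictly between the two copies of `y`
    have hBz : B.count z = 2 := by
      simpa [count_append, count_cons, count_eq_zero.mpr hzA, count_eq_zero.mpr hzC, hzy.symm]
        using hw.count_eq_two (mem_append_right A (mem_cons_of_mem y hz))
    have hzz : [z, z] <+ B := replicate_sublist_iff.mpr hBz.ge
    exact hw.not_sublist_nest hzy.symm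
      (((hzz.append (singleton_sublist.mpr mem_cons_self)).cons_cons y).trans
        (sublist_append_right A _))

theorem dup_middle_sublist_iff (hw : IsNonnesting n w) {x y z : ℕ} (hxy : x ≠ y) (hzy : z ≠ y) :
    [x, y, y, z] <+ w ↔ [x, y, z] <+ underlyingPerm w := by
  by_cases hy : y ∈ w
  · obtain ⟨A, B, C, rfl, hA, hB, hC⟩ :=
      exists_eq_append_cons_append_cons_of_count_eq_two (hw.count_eq_two hy)
    rw [cons_cons_cons_sublist_append_cons_append_cons_iff hxy hA hB hC,
      sublist_underlyingPerm_append_cons_iff hxy hA]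
    refine and_congr_right fun _ => ⟨fun hzC => ?_, fun ⟨hz, hzA, _⟩ => ?_⟩
    · have hz : z ∈ B ++ y :: C := by simp [hzC]
      exact ⟨hz, (hw.mem_right_iff_notMem_left hA hB hC hzy hz).mp hzC, hzy⟩
    · exact (hw.mem_right_iff_notMem_left hA hB hC hzy hz).mpr hzA
  · exact iff_of_false (fun h => hy (h.subset (by simp)))
      (fun h => hy (mem_underlyingPerm.mp (h.subset (by simp))))

end IsNonnesting

theorem nonnesting_avoid_ijjk_iff_underlying (n : ℕ) (w : List ℕ)
    (hw : IsNonnesting n w) (i j k : ℕ) (hijk : [i, j, k].Perm [1, 2, 3]) :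
    Avoids w [i, j, j, k] ↔ Avoids (underlyingPerm w) [i, j, k] := by
  obtain ⟨⟨hij, -⟩, hjk⟩ : (i ≠ j ∧ i ≠ k) ∧ j ≠ k := by
    simpa using hijk.nodup_iff.mpr (by decide)
  rw [Avoids, Avoids, not_iff_not, contains_dup_middle_iff, contains_triple_iff]
  refine exists₃_congr fun x y z => and_congr_left fun h => hw.dup_middle_sublist_iff ?_ ?_
  · exact fun hxy => hij ((h.2 0 1 (by simp) (by simp)).2.mp hxy)
  · exact fun hzy => hjk ((h.2 1 2 (by simp) (by simp)).2.mp hzy.symm)
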